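/- arXiv:2102.10255 — 8 statements merged into one kernel-verified Lean document; each statement's English description precedes it below -/
import Mathlib

section
/- For every m×n matrix M over ZMod 2 there exists an invertible upper-triangular n×n matrix V over ZMod 2 such that the product M * V is reduced, i.e. no two distinct nonzero columns of M * V have the same lowest nonzero row index. -/
/-- `i` is the lowest nonzero row index of column `j` of `R`. -/
def IsLow {m n : ℕ} (R : Matrix (Fin m) (Fin n) (ZMod 2)) (j : Fin n) (i : Fin m) : Prop :=
  R i j ≠ 0 ∧ ∀ i' : Fin m, R i' j ≠ 0 → i' ≤ i

/-- No two distinct nonzero columns of `R` have the same lowest nonzero row index. -/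
def Reduced {m n : ℕ} (R : Matrix (Fin m) (Fin n) (ZMod 2)) : Prop :=
  ∀ j k : Fin n, j ≠ k → ∀ i i' : Fin m, IsLow R j i → IsLow R k i' → i ≠ i'

/-- `W` is upper-triangular: `W i j = 0` whenever `i > j`. -/
def UpperTri {n : ℕ} (W : Matrix (Fin n) (Fin n) (ZMod 2)) : Prop :=
  ∀ i j : Fin n, j < i → W i j = 0

/-!
This is the standard column reduction of persistent homology. While two columns `k < j`
share a low `i`, add column `k` to column `j`, i.e. multiply on the right by the
transvection `1 + E_kj`, which is invertible and upper-triangular. Over `ZMod 2` the two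
entries in row `i` cancel, so the low of column `j` drops and no other column changes;
hence `∑ⱼ (low j + 1)`, counting zero columns as `0`, strictly decreases and the process
terminates in a reduced matrix.
-/

open Matrix Finset

variable {m n : ℕ}

theorem upperTri_iff_blockTriangular {W : Matrix (Fin n) (Fin n) (ZMod 2)} :
    UpperTri W ↔ W.BlockTriangular id :=
  ⟨fun h i j => h i j, fun h i j => @h i j⟩

theorem upperTri_one : UpperTri (1 : Matrix (Fin n) (Fin n) (ZMod 2)) :=
  upperTri_iff_blockTriangular.2 blockTriangular_one

theorem UpperTri.mul {V W : Matrix (Fin n) (Fin n) (ZMod 2)} (hV : UpperTri V)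
    (hW : UpperTri W) : UpperTri (V * W) :=
  upperTri_iff_blockTriangular.2 <|
    (upperTri_iff_blockTriangular.1 hV).mul (upperTri_iff_blockTriangular.1 hW)

theorem upperTri_transvection {k j : Fin n} (hkj : k ≤ j) (c : ZMod 2) :
    UpperTri (transvection k j c) :=
  upperTri_iff_blockTriangular.2 (blockTriangular_transvection hkj c)

theorem isUnit_transvection {R : Type*} [CommRing R] {ι : Type*} [Fintype ι] [DecidableEq ι]
    {k j : ι} (hkj : k ≠ j) (c : R) : IsUnit (transvection k j c) :=
  (isUnit_iff_isUnit_det _).2 (by rw [det_transvection_of_ne k j hkj]; exact isUnit_one)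

theorem exists_isLow_of_not_reduced {R : Matrix (Fin m) (Fin n) (ZMod 2)} (h : ¬ Reduced R) :
    ∃ k j, k < j ∧ ∃ i, IsLow R k i ∧ IsLow R j i := by
  simp only [Reduced, not_forall, not_not] at h
  obtain ⟨j, k, hjk, i, _, hj, hk, rfl⟩ := h
  rcases hjk.lt_or_gt with hlt | hlt
  · exact ⟨j, k, hlt, i, hj, hk⟩
  · exact ⟨k, j, hlt, i, hk, hj⟩

/-- `low + 1` for a nonzero column, `0` for a zero column. -/
def colWeight (R : Matrix (Fin m) (Fin n) (ZMod 2)) (j : Fin n) : ℕ :=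
  {i | R i j ≠ 0}.toFinset.sup fun i => i.val + 1

def lowWeight (R : Matrix (Fin m) (Fin n) (ZMod 2)) : ℕ :=
  ∑ j, colWeight R j

theorem colWeight_eq_of_isLow {R : Matrix (Fin m) (Fin n) (ZMod 2)} {j : Fin n} {i : Fin m}
    (h : IsLow R j i) : colWeight R j = i.val + 1 := by
  refine le_antisymm (Finset.sup_le fun a ha => ?_) ?_
  · simpa using h.2 a (by simpa using ha)
  · exact Finset.le_sup (f := fun i : Fin m => i.val + 1) (by simpa using h.1)

theorem colWeight_le_of_forall_lt {R : Matrix (Fin m) (Fin n) (ZMod 2)} {j : Fin n}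
    {i : Fin m} (h : ∀ a, R a j ≠ 0 → a < i) : colWeight R j ≤ i.val :=
  Finset.sup_le fun a ha => h a (by simpa using ha)

theorem colWeight_congr {R S : Matrix (Fin m) (Fin n) (ZMod 2)} {j : Fin n}
    (h : ∀ a, R a j = S a j) : colWeight R j = colWeight S j := by
  simp only [colWeight, h]

theorem colWeight_mul_transvection_lt {M : Matrix (Fin m) (Fin n) (ZMod 2)} {k j : Fin n}
    {i : Fin m} (hk : IsLow M k i) (hj : IsLow M j i) :
    colWeight (M * transvection k j (1 : ZMod 2)) j < colWeight M j := by
  rw [colWeight_eq_of_isLow hj, Nat.lt_succ_iff]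
  refine colWeight_le_of_forall_lt fun a ha => ?_
  rw [mul_transvection_apply_same, one_mul] at ha
  rcases lt_trichotomy a i with hai | rfl | hia
  · exact hai
  · have hcancel : ∀ x y : ZMod 2, x ≠ 0 → y ≠ 0 → x + y = 0 := by decide
    exact absurd (hcancel _ _ hj.1 hk.1) ha
  · have hzero : ∀ l, IsLow M l i → M a l = 0 := fun l hl =>
      not_imp_comm.1 (hl.2 a) (not_le.2 hia)
    simp [hzero j hj, hzero k hk] at ha

theorem lowWeight_mul_transvection_lt {M : Matrix (Fin m) (Fin n) (ZMod 2)} {k j : Fin n}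
    {i : Fin m} (hk : IsLow M k i) (hj : IsLow M j i) :
    lowWeight (M * transvection k j (1 : ZMod 2)) < lowWeight M := by
  refine Finset.sum_lt_sum (fun l _ => ?_) ⟨j, mem_univ j, colWeight_mul_transvection_lt hk hj⟩
  by_cases hl : l = j
  · exact hl ▸ (colWeight_mul_transvection_lt hk hj).le
  · exact (colWeight_congr fun a => mul_transvection_apply_of_ne k j a l hl 1 M).le

theorem exists_reduction {m n : ℕ} (M : Matrix (Fin m) (Fin n) (ZMod 2)) :
    ∃ W : Matrix (Fin n) (Fin n) (ZMod 2), IsUnit W ∧ UpperTri W ∧ Reduced (M * W) := by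
  induction hM : lowWeight M using Nat.strong_induction_on generalizing M with
  | _ N ih =>
    by_cases hred : Reduced M
    · exact ⟨1, isUnit_one, upperTri_one, by rwa [Matrix.mul_one]⟩
    obtain ⟨k, j, hkj, i, hk, hj⟩ := exists_isLow_of_not_reduced hred
    obtain ⟨W, hWu, hWt, hWr⟩ :=
      ih _ (hM ▸ lowWeight_mul_transvection_lt hk hj) (M * transvection k j (1 : ZMod 2)) rfl
    refine ⟨transvection k j (1 : ZMod 2) * W, (isUnit_transvection hkj.ne 1).mul hWu,
      (upperTri_transvection hkj.le 1).mul hWt, ?_⟩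
    rwa [← Matrix.mul_assoc]
end

section
/- Let M be an m×n matrix over ZMod 2 and let R = M * V be a reduction of M (V invertible upper-triangular, R reduced). Then for every row index i and column index j, the rank of the lower-left submatrix of M consisting of rows ≥ i and columns ≤ j equals the number of column indices l ≤ j such that column l of R is nonzero and low_R(l) ≥ i. -/
/-- Rank of the lower-left submatrix of `M` consisting of rows `≥ i` and columns `≤ j`. -/
noncomputable def llRank {m n : ℕ} (M : Matrix (Fin m) (Fin n) (ZMod 2))
    (i : Fin m) (j : Fin n) : ℕ :=
  (M.submatrix (fun a : {a : Fin m // i ≤ a} => a.1)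
    (fun b : {b : Fin n // b ≤ j} => b.1)).rank

open Matrix

section UpperTriangular

variable {K m n n' : Type*} [LinearOrder n] [LinearOrder n']

theorem Matrix.IsUpperTriangular.submatrix_of_strictMono [Zero K] {W : Matrix n n K}
    (hW : W.IsUpperTriangular) {f : n' → n} (hf : StrictMono f) :
    (W.submatrix f f).IsUpperTriangular :=
  fun _ _ h => hW (hf h)

theorem Matrix.IsUpperTriangular.isUnit_diag [CommRing K] [Fintype n] {W : Matrix n n K}
    (hW : W.IsUpperTriangular) (hunit : IsUnit W) (c : n) : IsUnit (W c c) := by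
  have hdet := (isUnit_iff_isUnit_det W).mp hunit
  rw [det_of_isUpperTriangular hW, IsUnit.prod_univ_iff] at hdet
  exact hdet c

theorem Matrix.IsUpperTriangular.isUnit_det_submatrix_of_strictMono [CommRing K] [Fintype n]
    [Fintype n'] {W : Matrix n n K} (hW : W.IsUpperTriangular) (hunit : IsUnit W) {f : n' → n}
    (hf : StrictMono f) : IsUnit (W.submatrix f f).det := by
  rw [det_of_isUpperTriangular (hW.submatrix_of_strictMono hf), IsUnit.prod_univ_iff]
  exact fun c => hW.isUnit_diag hunit (f c)

theorem Matrix.IsUpperTriangular.mul_submatrix_Iic [NonUnitalNonAssocSemiring K] [Fintype n]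
    {l : Type*} {M : Matrix m n K} {W : Matrix n n K} (hW : W.IsUpperTriangular) (r : l → m)
    (j : n) :
    let c : {b // b ≤ j} → n := Subtype.val
    (M * W).submatrix r c = M.submatrix r c * W.submatrix c c := by
  ext a b
  have hlater : ∀ c : {c // ¬c ≤ j}, M (r a) c * W c b = 0 := fun c => by
    rw [hW (b.2.trans_lt (not_le.mp c.2)), mul_zero]
  rw [submatrix_apply, mul_apply, mul_apply, ← Fintype.sum_subtype_add_sum_subtype (· ≤ j),
    Fintype.sum_eq_zero _ hlater, add_zero]
  rfl

end UpperTriangular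

theorem linearIndependent_of_injective_pivot {K ι ρ : Type*} [Ring K] [NoZeroDivisors K]
    [LinearOrder ρ] (v : ι → ρ → K) (p : ι → ρ) (hpivot : ∀ s, v s (p s) ≠ 0)
    (hafter : ∀ s r, p s < r → v s r = 0) (hp : Function.Injective p) :
    LinearIndependent K v := by
  classical
  rw [linearIndependent_iff']
  intro S g hg s hs
  by_contra hgs
  set T := S.filter (g · ≠ 0)
  obtain ⟨t, htT, htmax⟩ := T.exists_max_image p ⟨s, Finset.mem_filter.mpr ⟨hs, hgs⟩⟩
  have hgt : g t ≠ 0 := (Finset.mem_filter.mp htT).2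
  -- `t` has the latest pivot among the terms that occur, so it alone contributes at `p t`.
  have hcoord : ∑ u ∈ S, g u * v u (p t) = g t * v t (p t) := by
    refine Finset.sum_eq_single_of_mem t (Finset.mem_filter.mp htT).1 fun u hu hut => ?_
    by_cases hgu : g u = 0
    · rw [hgu, zero_mul]
    · have hlt : p u < p t :=
        (htmax u (Finset.mem_filter.mpr ⟨hu, hgu⟩)).lt_of_ne (hp.ne hut)
      rw [hafter u _ hlt, mul_zero]
  have hzero := congrFun hg (p t)
  simp only [Finset.sum_apply, Pi.smul_apply, smul_eq_mul, Pi.zero_apply, hcoord] at hzero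
  exact mul_ne_zero hgt (hpivot t) hzero

theorem Matrix.rank_eq_ncard_of_linearIndepOn {K m n : Type*} [Field K] [Fintype n]
    (A : Matrix m n K) (S : Set n) (hS : LinearIndepOn K A.col S)
    (hzero : ∀ c ∉ S, A.col c = 0) : A.rank = S.ncard := by
  classical
  have hspan : Submodule.span K (Set.range A.col) = Submodule.span K (A.col '' S) := by
    refine le_antisymm (Submodule.span_le.mpr ?_)
      (Submodule.span_mono (Set.image_subset_range _ _))
    rintro _ ⟨c, rfl⟩
    by_cases hc : c ∈ S
    · exact Submodule.subset_span ⟨c, hc, rfl⟩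
    · rw [hzero c hc]
      exact Submodule.zero_mem _
  rw [rank_eq_finrank_span_cols, hspan, Set.image_eq_range, finrank_span_eq_card hS,
    ← Nat.card_eq_fintype_card, Nat.card_coe_set_eq]

section Lows

variable {m n : ℕ}

theorem exists_isLow_ge_of_ne_zero (R : Matrix (Fin m) (Fin n) (ZMod 2)) {l : Fin n} {a : Fin m}
    (h : R a l ≠ 0) : ∃ il, IsLow R l il ∧ a ≤ il := by
  classical
  obtain ⟨il, hil, hmax⟩ :=
    (Finset.univ.filter (R · l ≠ 0)).exists_max_image id ⟨a, by simpa using h⟩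
  simp only [Finset.mem_filter, Finset.mem_univ, true_and, id] at hil hmax
  exact ⟨il, ⟨hil, hmax⟩, hmax a h⟩

theorem llRank_mul_of_upperTri (M : Matrix (Fin m) (Fin n) (ZMod 2))
    {W : Matrix (Fin n) (Fin n) (ZMod 2)} (hW : IsUnit W) (hUT : UpperTri W) (i : Fin m)
    (j : Fin n) : llRank (M * W) i j = llRank M i j := by
  have hW' : W.IsUpperTriangular := fun a b h => hUT a b h
  rw [llRank, llRank, hW'.mul_submatrix_Iic, rank_mul_eq_left_of_isUnit_det _ _
    (hW'.isUnit_det_submatrix_of_strictMono hW (Subtype.strictMono_coe _))]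

theorem llRank_of_reduced {R : Matrix (Fin m) (Fin n) (ZMod 2)} (hR : Reduced R) (i : Fin m)
    (j : Fin n) : llRank R i j = {l | l ≤ j ∧ ∃ il, IsLow R l il ∧ i ≤ il}.ncard := by
  set A := R.submatrix (fun a : {a // i ≤ a} => a.1) (fun b : {b // b ≤ j} => b.1)
  set S : Set {b // b ≤ j} := {s | ∃ il, IsLow R s il ∧ i ≤ il}
  have hzero : ∀ c ∉ S, A.col c = 0 := by
    intro c hc
    funext a
    by_contra h
    obtain ⟨il, hlow, hle⟩ := exists_isLow_ge_of_ne_zero R h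
    exact hc ⟨il, hlow, a.2.trans hle⟩
  have hindep : LinearIndepOn (ZMod 2) A.col S := by
    choose low hlow hge using fun s : S => s.2
    refine linearIndependent_of_injective_pivot _ (fun s => ⟨low s, hge s⟩)
      (fun s => (hlow s).1) (fun s r hr => ?_) (fun s t hst => ?_)
    · by_contra h
      exact not_le.mpr hr ((hlow s).2 r h)
    · by_contra hne
      exact hR s t (fun h => hne (Subtype.ext (Subtype.ext h))) _ _ (hlow s) (hlow t)
        (congrArg Subtype.val hst)
  rw [llRank, rank_eq_ncard_of_linearIndepOn A S hindep hzero,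
    ← Set.ncard_image_of_injective S Subtype.val_injective]
  congr 1
  ext l
  simp [S, and_comm]

end Lows

theorem llRank_eq_card_lows {m n : ℕ} (M : Matrix (Fin m) (Fin n) (ZMod 2))
    (W : Matrix (Fin n) (Fin n) (ZMod 2)) (hW : IsUnit W) (hUT : UpperTri W)
    (hRed : Reduced (M * W)) (i : Fin m) (j : Fin n) :
    llRank M i j =
      {l : Fin n | l ≤ j ∧ ∃ il : Fin m, IsLow (M * W) l il ∧ i ≤ il}.ncard := by
  rw [← llRank_mul_of_upperTri M hW hUT, llRank_of_reduced hRed]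
end

section
/- Let M be an m×n matrix over ZMod 2, let R = M * V be a reduction of M, let j be a column index with column j of R nonzero, and let i be a row index. Writing r(i,j) for the rank of the lower-left submatrix of M with rows ≥ i and columns ≤ j (with r(i,j) = 0 when the row range or column range is empty), one has low_R(j) = i if and only if r(i,j) − r(i+1,j) − r(i,j−1) + r(i+1,j−1) = 1. -/
/-- Rank of the lower-left submatrix of `M` consisting of rows with index `≥ i` and columns
with index `< k` (indices read as natural numbers). It is `0` when either range is empty.
`r(i,j)` of the paper, with columns `≤ j`, is `llRankN M i (j+1)`. -/
noncomputable def llRankN {m n : ℕ} (M : Matrix (Fin m) (Fin n) (ZMod 2)) (i k : ℕ) : ℕ :=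
  (M.submatrix (fun a : {a : Fin m // i ≤ a.1} => a.1)
    (fun b : {b : Fin n // b.1 < k} => b.1)).rank

open Finset

theorem linearIndependent_of_injective_pivot_s2 {K ι κ : Type*} [Ring K] [NoZeroDivisors K]
    [Fintype ι] [LinearOrder κ] {v : ι → κ → K} {ℓ : ι → κ} (hpiv : ∀ b, v b (ℓ b) ≠ 0)
    (hbelow : ∀ b a, ℓ b < a → v b a = 0) (hℓ : Function.Injective ℓ) :
    LinearIndependent K v := by
  classical
  rw [Fintype.linearIndependent_iff]
  -- evaluate a vanishing combination at the highest pivot of its support: only one term survives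
  by_contra! ⟨g, hg, hsupp⟩
  obtain ⟨b₀, hb₀, hmax⟩ := (univ.filter fun b => g b ≠ 0).exists_max_image ℓ
    (by simpa [Finset.filter_nonempty_iff] using hsupp)
  have hb₀ : g b₀ ≠ 0 := (Finset.mem_filter.mp hb₀).2
  have hcoord := congrFun hg (ℓ b₀)
  rw [Finset.sum_apply, Finset.sum_eq_single b₀] at hcoord
  · exact mul_ne_zero hb₀ (hpiv b₀) hcoord
  · intro b _ hne
    by_cases hgb : g b = 0
    · simp [hgb]
    · have hlt : ℓ b < ℓ b₀ := (hmax b (by simpa using hgb)).lt_of_ne (hℓ.ne hne)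
      simp [hbelow b _ hlt]
  · simp

theorem Matrix.rank_eq_card_ne_zero_col {K m n : Type*} [CommRing K] [Nontrivial K] [Fintype n]
    (A : Matrix m n K) (h : LinearIndependent K fun b : {b // A.col b ≠ 0} => A.col b) :
    A.rank = Nat.card {b // A.col b ≠ 0} := by
  classical
  have hrange : Set.range A.col \ {0} = Set.range fun b : {b // A.col b ≠ 0} => A.col b := by
    ext v
    constructor
    · rintro ⟨⟨b, rfl⟩, hb⟩
      exact ⟨⟨b, hb⟩, rfl⟩
    · rintro ⟨b, rfl⟩
      exact ⟨⟨b, rfl⟩, b.2⟩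
  rw [rank_eq_finrank_span_cols, ← Submodule.span_sdiff_singleton_zero, hrange,
    finrank_span_eq_card h, Nat.card_eq_fintype_card]

namespace Matrix

variable {R ι κ ρ : Type*} [CommRing R] [Fintype ι] [LinearOrder ι]

theorem IsUpperTriangular.isUnit_det_submatrix [DecidableEq ι] {W : Matrix ι ι R}
    (hUT : W.IsUpperTriangular) (hW : IsUnit W.det) (p : ι → Prop) [DecidablePred p] :
    IsUnit (W.submatrix ((↑) : {x // p x} → ι) (↑)).det := by
  have hsub : (W.submatrix ((↑) : {x // p x} → ι) (↑)).IsUpperTriangular := hUT.submatrix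
  rw [det_of_isUpperTriangular hUT, IsUnit.prod_univ_iff] at hW
  rw [det_of_isUpperTriangular hsub, IsUnit.prod_univ_iff]
  exact fun x => hW x

theorem submatrix_mul_of_isUpperTriangular [Fintype κ] (M : Matrix κ ι R) {W : Matrix ι ι R}
    (hUT : W.IsUpperTriangular) (r : ρ → κ) {p : ι → Prop} [DecidablePred p]
    (hp : IsLowerSet {x | p x}) :
    (M * W).submatrix r ((↑) : {x // p x} → ι)
      = M.submatrix r ((↑) : {x // p x} → ι) * W.submatrix ((↑) : {x // p x} → ι) (↑) := by
  ext a b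
  simp only [submatrix_apply, mul_apply]
  rw [← Fintype.sum_subtype_add_sum_subtype p, add_eq_left]
  refine Finset.sum_eq_zero fun x _ => ?_
  have hbx : (b : ι) < x := not_le.mp fun hxb => x.2 (hp hxb b.2)
  rw [hUT hbx, mul_zero]

theorem rank_submatrix_mul_of_isUpperTriangular [DecidableEq ι] [Fintype κ] (M : Matrix κ ι R)
    {W : Matrix ι ι R} (hUT : W.IsUpperTriangular) (hW : IsUnit W.det) (r : ρ → κ)
    {p : ι → Prop} [DecidablePred p] (hp : IsLowerSet {x | p x}) :
    ((M * W).submatrix r ((↑) : {x // p x} → ι)).rank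
      = (M.submatrix r ((↑) : {x // p x} → ι)).rank := by
  rw [submatrix_mul_of_isUpperTriangular M hUT r hp,
    rank_mul_eq_left_of_isUnit_det _ _ (hUT.isUnit_det_submatrix hW p)]

end Matrix

theorem card_filter_lt_succ {n : ℕ} (P : Fin n → Prop) [DecidablePred P] (j : Fin n) :
    #{j' : Fin n | j'.1 < j.1 + 1 ∧ P j'}
      = #{j' : Fin n | j'.1 < j.1 ∧ P j'} + if P j then 1 else 0 := by
  have hIic : filter (fun j' : Fin n => j'.1 < j.1 + 1 ∧ P j') univ = (Iic j).filter P := by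
    ext
    simp only [mem_filter, mem_univ, true_and, mem_Iic, Fin.le_def, Nat.lt_succ_iff]
  have hIio : filter (fun j' : Fin n => j'.1 < j.1 ∧ P j') univ = (Iio j).filter P := by
    ext
    simp only [mem_filter, mem_univ, true_and, mem_Iio, Fin.lt_def]
  rw [hIic, hIio, ← Iio_insert, filter_insert]
  split_ifs <;> simp

section ZModTwo

variable {m n : ℕ} {R : Matrix (Fin m) (Fin n) (ZMod 2)}

theorem upperTri_iff_isUpperTriangular {W : Matrix (Fin n) (Fin n) (ZMod 2)} :
    UpperTri W ↔ W.IsUpperTriangular :=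
  ⟨fun h _ _ hlt => h _ _ hlt, fun h _ _ hlt => h hlt⟩

theorem llRankN_mul_of_upperTri (M : Matrix (Fin m) (Fin n) (ZMod 2))
    {W : Matrix (Fin n) (Fin n) (ZMod 2)} (hW : IsUnit W) (hUT : UpperTri W) (a k : ℕ) :
    llRankN (M * W) a k = llRankN M a k :=
  Matrix.rank_submatrix_mul_of_isUpperTriangular M (upperTri_iff_isUpperTriangular.mp hUT)
    ((Matrix.isUnit_iff_isUnit_det W).mp hW) _ fun _ _ hle hlt => Nat.lt_of_le_of_lt hle hlt

def NonzeroFromRow (R : Matrix (Fin m) (Fin n) (ZMod 2)) (a : ℕ) (j : Fin n) : Prop :=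
  ∃ i : Fin m, a ≤ i.1 ∧ R i j ≠ 0

instance (R : Matrix (Fin m) (Fin n) (ZMod 2)) (a : ℕ) : DecidablePred (NonzeroFromRow R a) :=
  fun _ => inferInstanceAs (Decidable (∃ _, _))

theorem NonzeroFromRow.mono {a b : ℕ} {j : Fin n} (hab : a ≤ b) (h : NonzeroFromRow R b j) :
    NonzeroFromRow R a j :=
  let ⟨i, hbi, hi⟩ := h
  ⟨i, hab.trans hbi, hi⟩

theorem exists_isLow_of_ne_zero {i₀ : Fin m} {j : Fin n} (h : R i₀ j ≠ 0) :
    ∃ i, IsLow R j i ∧ i₀ ≤ i := by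
  obtain ⟨i, hi, hmax⟩ := (univ.filter fun i => R i j ≠ 0).exists_max_image id ⟨i₀, by simpa⟩
  exact ⟨i, ⟨(mem_filter.mp hi).2, fun i' h => hmax i' (by simpa using h)⟩,
    hmax i₀ (by simpa using h)⟩

theorem NonzeroFromRow.exists_isLow {a : ℕ} {j : Fin n} (h : NonzeroFromRow R a j) :
    ∃ i, IsLow R j i ∧ a ≤ i.1 :=
  let ⟨_, hai₀, hi₀⟩ := h
  let ⟨i, hi, hle⟩ := exists_isLow_of_ne_zero hi₀
  ⟨i, hi, hai₀.trans hle⟩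

theorem isLow_iff_nonzeroFromRow {j : Fin n} {i : Fin m} :
    IsLow R j i ↔ NonzeroFromRow R i j ∧ ¬NonzeroFromRow R (i + 1) j := by
  constructor
  · rintro ⟨hi, hmax⟩
    exact ⟨⟨i, le_rfl, hi⟩, fun ⟨i', hlt, hi'⟩ => (hmax i' hi').not_gt hlt⟩
  · rintro ⟨⟨i', hle, hi'⟩, hbelow⟩
    obtain rfl : i' = i := Fin.ext (le_antisymm (not_lt.mp fun hlt => hbelow ⟨i', hlt, hi'⟩) hle)
    exact ⟨hi', fun i'' hi'' => not_lt.mp fun hlt => hbelow ⟨i'', hlt, hi''⟩⟩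

theorem llRankN_eq_card_of_reduced (hRed : Reduced R) (a k : ℕ) :
    llRankN R a k = #{j : Fin n | j.1 < k ∧ NonzeroFromRow R a j} := by
  set A := R.submatrix (fun i : {i : Fin m // a ≤ i.1} => i.1)
    (fun j : {j : Fin n // j.1 < k} => j.1)
  have hcol : ∀ j, A.col j ≠ 0 ↔ NonzeroFromRow R a j.1 := by
    intro j
    rw [Function.ne_iff]
    exact ⟨fun ⟨i, hi⟩ => ⟨i.1, i.2, hi⟩, fun ⟨i, hai, hi⟩ => ⟨⟨i, hai⟩, hi⟩⟩
  have hli : LinearIndependent (ZMod 2) fun j : {j // A.col j ≠ 0} => A.col j := by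
    choose ℓ hℓ hℓa using fun j : {j // A.col j ≠ 0} => ((hcol j).mp j.2).exists_isLow
    refine linearIndependent_of_injective_pivot_s2 (ℓ := fun j => ⟨ℓ j, hℓa j⟩)
      (fun j => (hℓ j).1) (fun j i hlt => ?_) fun j j' h => ?_
    · exact not_not.mp fun hne => (hℓ j).2 i.1 hne |>.not_gt hlt
    · by_contra hne
      exact hRed j.1.1 j'.1.1 (fun h' => hne (Subtype.ext (Subtype.ext h'))) _ _ (hℓ j) (hℓ j')
        (congrArg Subtype.val h)
  unfold llRankN
  rw [A.rank_eq_card_ne_zero_col hli, Nat.card_congr (Equiv.subtypeEquivRight hcol),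
    Nat.card_congr (Equiv.subtypeSubtypeEquivSubtypeInter _ _), Nat.card_eq_fintype_card,
    Fintype.card_subtype]

end ZModTwo

theorem isLow_iff_rank_formula_general {m n : ℕ} (M : Matrix (Fin m) (Fin n) (ZMod 2))
    (W : Matrix (Fin n) (Fin n) (ZMod 2)) (hW : IsUnit W) (hUT : UpperTri W)
    (hRed : Reduced (M * W)) (j : Fin n) (i : Fin m) :
    IsLow (M * W) j i ↔
      (llRankN M i.1 (j.1 + 1) : ℤ) - llRankN M (i.1 + 1) (j.1 + 1)
        - llRankN M i.1 j.1 + llRankN M (i.1 + 1) j.1 = 1 := by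
  have hcount : ∀ a k, llRankN M a k = #{j' : Fin n | j'.1 < k ∧ NonzeroFromRow (M * W) a j'} :=
    fun a k => by rw [← llRankN_mul_of_upperTri M hW hUT, llRankN_eq_card_of_reduced hRed]
  have hmono := NonzeroFromRow.mono (R := M * W) (j := j) (Nat.le_succ i.1)
  rw [isLow_iff_nonzeroFromRow]
  simp only [hcount, card_filter_lt_succ]
  push_cast
  rw [show ∀ c d a b : ℤ, c + a - (d + b) - c + d = a - b from fun _ _ _ _ => by ring]
  split_ifs with h₀ h₁ h₁ <;> simp_all

theorem isLow_iff_rank_formula {m n : ℕ} (M : Matrix (Fin m) (Fin n) (ZMod 2))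
    (W : Matrix (Fin n) (Fin n) (ZMod 2)) (hW : IsUnit W) (hUT : UpperTri W)
    (hRed : Reduced (M * W)) (j : Fin n) (hj : ∃ i0 : Fin m, (M * W) i0 j ≠ 0) (i : Fin m) :
    IsLow (M * W) j i ↔
      (llRankN M i.1 (j.1 + 1) : ℤ) - llRankN M (i.1 + 1) (j.1 + 1)
        - llRankN M i.1 j.1 + llRankN M (i.1 + 1) j.1 = 1 :=
  isLow_iff_rank_formula_general M W hW hUT hRed j i
end

section
/- Let G be a simple graph on a finite vertex type V and let x : Sym2 V → ZMod 2 be a nonzero vector with x e = 0 whenever e is not an edge of G, such that the incidence matrix of G over ZMod 2 applied to x is the zero vector. Then there exists a cycle p in G all of whose edges e satisfy x e = 1. -/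
/-!
The edges on which `x` equals `1` form a subgraph `H ≤ G`, and row `v` of the kernel equation
says that `v` has even degree in `H`. So `H` has an edge but no vertex of degree one, and then
a longest path of `H` cannot be extended at its first vertex `u`: the second neighbour of `u`
already lies on the path and closes a cycle.
-/

open Matrix

namespace SimpleGraph

variable {V : Type*}

theorem Walk.IsPath.exists_isCycle_of_adj_mem_support {G : SimpleGraph V} {u v w : V}
    {p : G.Walk u v} (hp : p.IsPath) (huw : G.Adj u w) (hw : w ∈ p.support) (hne : w ≠ p.snd) :
    ∃ (x : V) (c : G.Walk x x), c.IsCycle := by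
  classical
  refine ⟨w, .cons huw.symm (p.takeUntil w hw),
    Path.cons_isCycle ⟨_, hp.takeUntil hw⟩ huw.symm fun he => hne ?_⟩
  exact hp.eq_snd_of_mem_edges (Sym2.eq_swap ▸ p.edges_takeUntil_subset_edges hw he)

theorem exists_isCycle_of_forall_degree_ne_one {G : SimpleGraph V} [Finite V] [G.LocallyFinite]
    (hG : G.edgeSet.Nonempty) (hdeg : ∀ v, G.degree v ≠ 1) :
    ∃ (u : V) (c : G.Walk u u), c.IsCycle := by
  classical
  have := Fintype.ofFinite V
  obtain ⟨⟨a, b⟩, hab⟩ := hG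
  let edgePath : Σ u v, G.Path u v := ⟨a, b, hab.toWalk, hab.isPath_toWalk⟩
  have : Nonempty (Σ u v, G.Path u v) := ⟨edgePath⟩
  obtain ⟨⟨u, v, p, hp⟩, hmax⟩ :=
    Finite.exists_max fun q : Σ u v, G.Path u v => q.2.2.1.length
  have hnil : ¬p.Nil := Walk.not_nil_iff_lt_length.mpr (hmax edgePath)
  obtain ⟨w, huw, hne⟩ : ∃ w, G.Adj u w ∧ w ≠ p.snd := by
    by_contra! h
    exact hdeg u (degree_eq_one_iff_existsUnique_adj.mpr ⟨_, p.adj_snd hnil, h⟩)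
  by_cases hw : w ∈ p.support
  · exact hp.exists_isCycle_of_adj_mem_support huw hw hne
  · have := hmax ⟨w, v, _, hp.cons hw (h := huw.symm)⟩
    simp at this

theorem incMatrix_mulVec_indicator_edgeSet {R : Type*} [NonAssocSemiring R] [Fintype V]
    [DecidableEq V] {G H : SimpleGraph V} [DecidableRel G.Adj] [DecidableRel H.Adj]
    (hHG : H ≤ G) (v : V) : (G.incMatrix R *ᵥ H.edgeSet.indicator 1) v = H.degree v := by
  have hinc : G.incidenceSet v ∩ H.edgeSet = H.incidenceSet v := by
    ext e
    exact ⟨fun ⟨⟨_, hv⟩, he⟩ => ⟨he, hv⟩,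
      fun ⟨he, hv⟩ => ⟨⟨edgeSet_mono hHG he, hv⟩, he⟩⟩
  calc (G.incMatrix R *ᵥ H.edgeSet.indicator 1) v = ∑ e, H.incMatrix R v e := by
        refine Finset.sum_congr rfl fun e _ => ?_
        simp only [incMatrix_apply, ← hinc, Set.inter_indicator_one, Pi.mul_apply]
    _ = H.degree v := sum_incMatrix_apply H

end SimpleGraph

theorem ZMod.eq_one_iff_ne_zero (a : ZMod 2) : a = 1 ↔ a ≠ 0 := by
  revert a
  decide

theorem ZMod.eq_indicator_setOf_eq_one {α : Type*} (x : α → ZMod 2) :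
    x = {e | x e = 1}.indicator 1 := by
  funext e
  by_cases h : x e = 1
  · simp [h]
  · simpa [h] using (ZMod.eq_one_iff_ne_zero (x e)).not.mp h

open SimpleGraph

/-- A nonzero vector supported on the edges of `G` lying in the kernel of the incidence
matrix over `ZMod 2` contains a cycle among its support. -/
theorem ker_incMatrix_exists_cycle {V : Type*} [Fintype V] [DecidableEq V]
    (G : SimpleGraph V) (x : Sym2 V → ZMod 2) (hx0 : x ≠ 0)
    (hx : ∀ e, e ∉ G.edgeSet → x e = 0)
    (hker : (letI := Classical.decRel G.Adj; G.incMatrix (ZMod 2)) *ᵥ x = 0) :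
    ∃ (u : V) (p : G.Walk u u), p.IsCycle ∧ ∀ e ∈ p.edges, x e = 1 := by
  classical
  set H := fromEdgeSet {e | x e = 1}
  have hsupp : {e | x e = 1} ⊆ G.edgeSet := fun e he => by
    by_contra hG
    exact one_ne_zero (he.symm.trans (hx e hG))
  have hH : H.edgeSet = {e | x e = 1} := by
    rw [edgeSet_fromEdgeSet]
    exact (Set.disjoint_left.mpr fun e he => G.not_isDiag_of_mem_edgeSet (hsupp he)).sdiff_eq_left
  have hHG : H ≤ G := edgeSet_subset_edgeSet.mp (hH ▸ hsupp)
  have hdeg : ∀ v, H.degree v ≠ 1 := by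
    intro v h
    have := congrFun hker v
    rw [ZMod.eq_indicator_setOf_eq_one x, ← hH, incMatrix_mulVec_indicator_edgeSet hHG, h] at this
    exact one_ne_zero (by exact_mod_cast this)
  have hHne : H.edgeSet.Nonempty := by
    obtain ⟨e, he⟩ := Function.ne_iff.mp hx0
    exact ⟨e, hH ▸ (ZMod.eq_one_iff_ne_zero _).mpr he⟩
  obtain ⟨u, c, hc⟩ := exists_isCycle_of_forall_degree_ne_one hHne hdeg
  refine ⟨u, c.mapLe hHG, hc.mapLe hHG, fun e he => ?_⟩
  rw [Walk.edges_mapLe_eq_edges] at he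
  exact hH.subset (c.edges_subset_edgeSet he)
end

section
/- Let G be a connected simple graph on a finite nonempty vertex type V with n vertices. Then the rank over ZMod 2 of the incidence matrix of G equals n − 1. -/
/-!
In characteristic 2 the entry of `Mᵀ x` at an edge `uv` of the incidence matrix `M` is
`x u + x v`, which vanishes iff `x u = x v`. On a connected graph the kernel of `Mᵀ` is therefore
the line of constant vectors, and rank–nullity for `Mᵀ` gives `rank M = n - 1`.
-/

open Matrix

namespace SimpleGraph

variable {V R : Type*} {G : SimpleGraph V}

theorem Reachable.apply_eq_of_forall_adj {β : Type*} {f : V → β}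
    (hf : ∀ u v, G.Adj u v → f u = f v) {u v : V} (huv : G.Reachable u v) : f u = f v := by
  obtain ⟨p⟩ := huv
  induction p with
  | nil => rfl
  | cons hadj _ ih => exact (hf _ _ hadj).trans ih

variable [Fintype V] [DecidableEq V] [DecidableRel G.Adj]

theorem transpose_incMatrix_mulVec_of_adj [NonAssocSemiring R] {u v : V} (h : G.Adj u v)
    (x : V → R) : ((G.incMatrix R)ᵀ *ᵥ x) s(u, v) = x u + x v := by
  have hpair : ({w | w = u ∨ w = v} : Finset V) = {u, v} := by ext; simp
  simp only [mulVec, dotProduct, transpose_apply, incMatrix_apply', mk'_mem_incidenceSet_iff,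
    h, true_and, ite_mul, one_mul, zero_mul]
  rw [← Finset.sum_filter, hpair, Finset.sum_pair h.ne]

theorem transpose_incMatrix_mulVec_of_notMem_edgeSet [NonAssocSemiring R] {e : Sym2 V}
    (he : e ∉ G.edgeSet) (x : V → R) : ((G.incMatrix R)ᵀ *ᵥ x) e = 0 :=
  Finset.sum_eq_zero fun w _ =>
    mul_eq_zero_of_left (G.incMatrix_of_notMem_incidenceSet fun hw => he hw.1) (x w)

theorem transpose_incMatrix_mulVec_eq_zero_iff [Ring R] [CharP R 2] {x : V → R} :
    (G.incMatrix R)ᵀ *ᵥ x = 0 ↔ ∀ u v, G.Adj u v → x u = x v := by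
  refine ⟨fun hx u v h => ?_, fun hx => funext fun e => ?_⟩
  · rw [← CharTwo.add_eq_zero, ← transpose_incMatrix_mulVec_of_adj h, hx, Pi.zero_apply]
  · induction e using Sym2.ind with
    | _ u v =>
      by_cases h : G.Adj u v
      · rw [transpose_incMatrix_mulVec_of_adj h, hx u v h, CharTwo.add_self_eq_zero,
          Pi.zero_apply]
      · exact transpose_incMatrix_mulVec_of_notMem_edgeSet h x

theorem Connected.ker_transpose_incMatrix_mulVecLin [CommRing R] [CharP R 2]
    (hG : G.Connected) :
    LinearMap.ker (G.incMatrix R)ᵀ.mulVecLin = Submodule.span R {1} := by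
  ext x
  rw [LinearMap.mem_ker, mulVecLin_apply, transpose_incMatrix_mulVec_eq_zero_iff,
    Submodule.mem_span_singleton]
  refine ⟨fun hx => ⟨x hG.nonempty.some, funext fun v => ?_⟩, ?_⟩
  · simpa using (hG.preconnected _ v).apply_eq_of_forall_adj hx
  · rintro ⟨c, rfl⟩ u v _
    rfl

theorem Connected.rank_incMatrix {K : Type*} [Field K] [CharP K 2] (hG : G.Connected) :
    (G.incMatrix K).rank = Fintype.card V - 1 := by
  have : Nonempty V := hG.nonempty
  have hsum := LinearMap.finrank_range_add_finrank_ker (G.incMatrix K)ᵀ.mulVecLin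
  rw [hG.ker_transpose_incMatrix_mulVecLin, finrank_span_singleton one_ne_zero,
    Module.finrank_fintype_fun_eq_card, ← Matrix.rank, rank_transpose] at hsum
  omega

end SimpleGraph

open Classical in
theorem rank_incMatrix_connected_general {V : Type*} [Fintype V] [DecidableEq V]
    (G : SimpleGraph V) (hG : G.Connected) :
    (G.incMatrix (ZMod 2)).rank = Fintype.card V - 1 :=
  hG.rank_incMatrix

open Classical in
/-- The incidence matrix over `ZMod 2` of a connected graph on `n ≥ 1` vertices has
rank `n - 1`. -/
theorem rank_incMatrix_connected {V : Type*} [Fintype V] [DecidableEq V] [Nonempty V]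
    (G : SimpleGraph V) (hG : G.Connected) :
    (G.incMatrix (ZMod 2)).rank = Fintype.card V - 1 :=
  rank_incMatrix_connected_general G hG
end

section
/- Let G be a connected simple graph on a finite vertex type V with n vertices and m edges. The ZMod 2-vector space of all vectors x : Sym2 V → ZMod 2 that vanish outside the edge set of G and satisfy that every vertex is incident to an even number of edges e with x e = 1 (equivalently, the incidence matrix of G over ZMod 2 applied to x is zero) has dimension m − n + 1. -/
/-!
Let `∂ : x ↦ incMatrix *ᵥ x` be the boundary map from the edge space (functions supported on
the `m` edges) to the vertex space `V → ZMod 2`; the cycle space is its kernel. Every column of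
the incidence matrix has exactly two ones, so in characteristic `2` the image of `∂` lies in the
hyperplane of vectors with coordinate sum `0`, of dimension `n - 1`. Conversely, the boundary of
the edges of a walk from `u` to `w` is `e_u + e_w`, and in a connected graph these vectors span
that hyperplane. Rank–nullity gives `dim ker ∂ = m - (n - 1)`.
-/

open Matrix

/-- The cycle space of `G` over `ZMod 2`: vectors vanishing outside the edge set of `G`
that lie in the kernel of the incidence matrix (equivalently, every vertex is incident to
an even number of edges carrying a `1`). -/
def cycleSpace {V : Type*} [Fintype V] [DecidableEq V] (G : SimpleGraph V) :
    Submodule (ZMod 2) (Sym2 V → ZMod 2) where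
  carrier := {x | (∀ e, e ∉ G.edgeSet → x e = 0) ∧ (by classical exact G.incMatrix (ZMod 2)) *ᵥ x = 0}
  add_mem' := by
    rintro a b ⟨ha1, ha2⟩ ⟨hb1, hb2⟩
    refine ⟨fun e he => ?_, ?_⟩
    · simp [Pi.add_apply, ha1 e he, hb1 e he]
    · rw [Matrix.mulVec_add, ha2, hb2, add_zero]
  zero_mem' := ⟨fun e _ => rfl, by rw [Matrix.mulVec_zero]⟩
  smul_mem' := by
    rintro c x ⟨hx1, hx2⟩
    refine ⟨fun e he => ?_, ?_⟩
    · simp [Pi.smul_apply, hx1 e he]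
    · rw [Matrix.mulVec_smul, hx2, smul_zero]

open Module LinearMap

theorem Submodule.finrank_inf_ker_add_finrank_map {K M N : Type*} [DivisionRing K]
    [AddCommGroup M] [Module K M] [AddCommGroup N] [Module K N] (S : Submodule K M)
    [FiniteDimensional K S] (f : M →ₗ[K] N) :
    finrank K ↥(S ⊓ ker f) + finrank K (S.map f) = finrank K S := by
  rw [← map_comap_subtype, finrank_map_subtype_eq, ← ker_domRestrict, ← range_domRestrict,
    add_comm]
  exact finrank_range_add_finrank_ker _

theorem LinearMap.finrank_ker_sum_proj_add_one (K ι : Type*) [DivisionRing K] [Fintype ι]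
    [Nonempty ι] : finrank K (ker (∑ i, proj i : (ι → K) →ₗ[K] K)) + 1 = Fintype.card ι := by
  classical
  set σ : (ι → K) →ₗ[K] K := ∑ i, proj i
  have hσ : Function.Surjective σ := by
    intro c
    obtain ⟨i⟩ := ‹Nonempty ι›
    exact ⟨Pi.single i c, by simp [σ]⟩
  rw [← finrank_fintype_fun_eq_card K, ← finrank_range_add_finrank_ker σ, add_comm,
    range_eq_top.2 hσ, finrank_top, finrank_self]

namespace SimpleGraph

variable {V : Type*} (G : SimpleGraph V) (R : Type*)

def edgeSpace [Semiring R] : Submodule R (Sym2 V → R) :=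
  ⨅ e ∈ G.edgeSetᶜ, ker (proj e)

variable {G R} in
theorem mem_edgeSpace [Semiring R] {x : Sym2 V → R} :
    x ∈ G.edgeSpace R ↔ ∀ e ∉ G.edgeSet, x e = 0 := by
  simp [edgeSpace, Submodule.mem_iInf]

theorem finrank_edgeSpace [DivisionRing R] [Finite V] :
    finrank R (G.edgeSpace R) = G.edgeSet.ncard := by
  classical
  have := Fintype.ofFinite V
  rw [edgeSpace, (iInfKerProjEquiv R (fun _ => R) disjoint_compl_right (by simp)).finrank_eq,
    finrank_fintype_fun_eq_card, ← Nat.card_eq_fintype_card, Nat.card_coe_set_eq]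

variable [Fintype V] [DecidableEq V] [DecidableRel G.Adj]

theorem incMatrix_mulVec_single_of_adj [NonAssocSemiring R] {u w : V} (h : G.Adj u w) :
    G.incMatrix R *ᵥ Pi.single s(u, w) 1 = Pi.single u 1 + Pi.single w 1 := by
  ext v
  by_cases hu : v = u
  · subst hu
    simp [incMatrix_apply', h, h.ne]
  · simp [incMatrix_apply', mk'_mem_incidenceSet_iff, h, hu, Pi.single_apply]

theorem sum_incMatrix_apply_eq_zero [NonAssocSemiring R] [CharP R 2] (e : Sym2 V) :
    ∑ v, G.incMatrix R v e = 0 := by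
  by_cases he : e ∈ G.edgeSet
  · rw [G.sum_incMatrix_apply_of_mem_edgeSet he, CharTwo.two_eq_zero]
  · exact G.sum_incMatrix_apply_of_notMem_edgeSet he

theorem sum_incMatrix_mulVec_eq_zero [Semiring R] [CharP R 2] (x : Sym2 V → R) :
    ∑ v, (G.incMatrix R *ᵥ x) v = 0 := by
  have hcols : (1 : V → R) ᵥ* G.incMatrix R = 0 := by
    ext e
    simp [vecMul, one_dotProduct, G.sum_incMatrix_apply_eq_zero]
  rw [← one_dotProduct, dotProduct_mulVec, hcols, zero_dotProduct]

theorem single_add_single_mem_map_edgeSpace [CommRing R] [CharP R 2] {u w : V}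
    (h : G.Reachable u w) :
    Pi.single u 1 + Pi.single w 1 ∈ (G.edgeSpace R).map (G.incMatrix R).mulVecLin := by
  obtain ⟨p⟩ := h
  induction p with
  | nil =>
    rw [← Pi.single_add, CharTwo.add_self_eq_zero, Pi.single_zero]
    exact zero_mem _
  | @cons u t w hadj p ih =>
    have hedge : Pi.single u 1 + Pi.single t 1 ∈
        (G.edgeSpace R).map (G.incMatrix R).mulVecLin :=
      ⟨Pi.single s(u, t) 1,
        mem_edgeSpace.2 fun e he => Pi.single_eq_of_ne (by rintro rfl; exact he hadj) _,
        G.incMatrix_mulVec_single_of_adj R hadj⟩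
    convert add_mem hedge ih using 1
    rw [add_assoc, ← add_assoc (Pi.single t 1), ← Pi.single_add, CharTwo.add_self_eq_zero,
      Pi.single_zero, zero_add]

theorem map_edgeSpace_incMatrix_eq_ker_sum_proj [CommRing R] [CharP R 2] (hG : G.Connected) :
    (G.edgeSpace R).map (G.incMatrix R).mulVecLin = ker (∑ v, proj v : (V → R) →ₗ[R] R) := by
  refine le_antisymm ?_ fun y hy => ?_
  · rintro _ ⟨x, -, rfl⟩
    simpa using G.sum_incMatrix_mulVec_eq_zero R x
  · obtain ⟨v₀⟩ := hG.nonempty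
    have hsum : ∑ v, y v = 0 := by simpa using hy
    have hdecomp : y = ∑ v, y v • (Pi.single v 1 + Pi.single v₀ 1 : V → R) := by
      simp only [smul_add, Finset.sum_add_distrib, ← Finset.sum_smul, hsum, zero_smul, add_zero]
      exact pi_eq_sum_univ' y
    rw [hdecomp]
    exact sum_mem fun v _ =>
      Submodule.smul_mem _ _ (G.single_add_single_mem_map_edgeSpace R (hG v v₀))

end SimpleGraph

theorem cycleSpace_eq_edgeSpace_inf_ker {V : Type*} [Fintype V] [DecidableEq V]
    (G : SimpleGraph V) [DecidableRel G.Adj] :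
    cycleSpace G = G.edgeSpace (ZMod 2) ⊓ ker (G.incMatrix (ZMod 2)).mulVecLin := by
  ext x
  simp only [cycleSpace, Submodule.mem_inf, SimpleGraph.mem_edgeSpace, mem_ker, mulVecLin_apply]
  -- `cycleSpace` is built with the classical `DecidableRel G.Adj` instance
  change _ ∧ _ ↔ _ ∧ _
  congr!

/-- For a connected graph with `n` vertices and `m` edges, the cycle space over `ZMod 2`
has dimension `m - n + 1`. -/
theorem finrank_cycleSpace {V : Type*} [Fintype V] [DecidableEq V]
    (G : SimpleGraph V) (hG : G.Connected) :
    (Module.finrank (ZMod 2) (cycleSpace G) : ℤ) =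
      (G.edgeSet.ncard : ℤ) - Fintype.card V + 1 := by
  classical
  have := hG.nonempty
  have hrank := (G.edgeSpace (ZMod 2)).finrank_inf_ker_add_finrank_map
    (G.incMatrix (ZMod 2)).mulVecLin
  rw [← cycleSpace_eq_edgeSpace_inf_ker, G.map_edgeSpace_incMatrix_eq_ker_sum_proj _ hG,
    G.finrank_edgeSpace] at hrank
  have hker := finrank_ker_sum_proj_add_one (ZMod 2) V
  omega
end

section
/- Let T be a simple graph on a finite vertex type that is a tree, and let u ≠ v be vertices of T that are not adjacent in T. Let T' be the graph obtained from T by adding the edge {u,v}. Then T' contains a cycle whose edge set equals {u,v} together with the edge set of the unique path from u to v in T; moreover, the edge set of every cycle in T' equals this set. -/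
/-!
A cycle of `T ⊔ {u,v}` must use the new edge `{u,v}`, since `T` is acyclic. Rotating and possibly
reversing the cycle so that it starts with the step `u → v`, the rest of it is a path from `v`
to `u` avoiding `{u,v}`, hence a path of `T`, hence the reverse of the unique `T`-path `q`.
-/

open SimpleGraph Walk

namespace SimpleGraph

variable {V : Type*}

theorem Walk.IsCycle.exists_cons_perm_edges {G : SimpleGraph V} {w u v : V} {p : G.Walk w w}
    (hp : p.IsCycle) (he : s(u, v) ∈ p.edges) :
    ∃ (h : G.Adj u v) (r : G.Walk v u), (cons h r).IsCycle ∧ (cons h r).edges.Perm p.edges := by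
  classical
  have of_snd_eq : ∀ c : G.Walk u u, c.IsCycle → c.snd = v →
      ∃ (h : G.Adj u v) (r : G.Walk v u), (cons h r).IsCycle ∧ (cons h r).edges.Perm c.edges := by
    rintro (_ | ⟨h, r⟩) hc hsnd
    · exact absurd hc not_isCycle_nil
    · rw [snd_cons] at hsnd
      subst hsnd
      exact ⟨h, r, hc, .refl _⟩
  have hu : u ∈ p.support := p.fst_mem_support_of_mem_edges he
  set c := p.rotate u hu
  have hc : c.IsCycle := hp.rotate hu
  have hcp : c.edges.Perm p.edges := (p.rotate_edges u hu).perm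
  have hv : v ∈ c.toSubgraph.neighborSet u := by
    rw [Subgraph.mem_neighborSet, ← Subgraph.mem_edgeSet, mem_edges_toSubgraph]
    exact hcp.mem_iff.2 he
  rw [hc.neighborSet_toSubgraph_endpoint] at hv
  rcases hv with hv | hv
  · obtain ⟨h, r, hr, hrc⟩ := of_snd_eq c hc hv.symm
    exact ⟨h, r, hr, hrc.trans hcp⟩
  · obtain ⟨h, r, hr, hrc⟩ := of_snd_eq c.reverse hc.reverse (by rw [snd_reverse, hv])
    refine ⟨h, r, hr, hrc.trans ?_⟩
    rw [edges_reverse]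
    exact (List.reverse_perm _).trans hcp

theorem Walk.mem_edgeSet_of_notMem_edges_sup_fromEdgeSet {G : SimpleGraph V} {e : Sym2 V}
    {a b : V} (p : (G ⊔ fromEdgeSet {e}).Walk a b) (he : e ∉ p.edges) :
    ∀ e' ∈ p.edges, e' ∈ G.edgeSet := by
  intro e' he'
  have := p.edges_subset_edgeSet he'
  rw [edgeSet_sup, edgeSet_fromEdgeSet] at this
  rcases this with h | ⟨rfl, -⟩
  · exact h
  · exact absurd he' he

theorem IsAcyclic.mem_edges_of_isCycle_sup_fromEdgeSet {G : SimpleGraph V} (hG : G.IsAcyclic)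
    {e : Sym2 V} {w : V} {p : (G ⊔ fromEdgeSet {e}).Walk w w} (hp : p.IsCycle) :
    e ∈ p.edges := by
  by_contra he
  exact hG _ (hp.transfer (p.mem_edgeSet_of_notMem_edges_sup_fromEdgeSet he))

theorem IsAcyclic.edges_of_isCycle_sup_fromEdgeSet {T : SimpleGraph V} (hT : T.IsAcyclic)
    {u v : V} {q : T.Walk u v} (hq : q.IsPath) {w : V}
    {p : (T ⊔ fromEdgeSet {s(u, v)}).Walk w w} (hp : p.IsCycle) :
    {e | e ∈ p.edges} = insert s(u, v) {e | e ∈ q.edges} := by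
  obtain ⟨h, r, hcyc, hperm⟩ :=
    hp.exists_cons_perm_edges (hT.mem_edges_of_isCycle_sup_fromEdgeSet hp)
  rw [cons_isCycle_iff] at hcyc
  have hrT := r.mem_edgeSet_of_notMem_edges_sup_fromEdgeSet hcyc.2
  have hrq : (r.transfer T hrT).reverse = q :=
    congrArg Subtype.val
      ((hT.subsingleton_path u v).allEq ⟨_, (hcyc.1.transfer hrT).reverse⟩ ⟨q, hq⟩)
  ext e
  rw [Set.mem_ofPred_eq, ← hperm.mem_iff, ← hrq]
  simp [edges_transfer]

end SimpleGraph

theorem tree_add_edge_cycle_general {V : Type*}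
    (T : SimpleGraph V) (hT : T.IsTree) (u v : V) (huv : u ≠ v) (hadj : ¬ T.Adj u v)
    (q : T.Walk u v) (hq : q.IsPath) :
    (∃ (w : V) (p : (T ⊔ SimpleGraph.fromEdgeSet {s(u, v)}).Walk w w),
        p.IsCycle ∧ {e : Sym2 V | e ∈ p.edges} = insert s(u, v) {e : Sym2 V | e ∈ q.edges}) ∧
      ∀ (w : V) (p : (T ⊔ SimpleGraph.fromEdgeSet {s(u, v)}).Walk w w), p.IsCycle →
        {e : Sym2 V | e ∈ p.edges} = insert s(u, v) {e : Sym2 V | e ∈ q.edges} := by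
  have huv' : (T ⊔ fromEdgeSet {s(u, v)}).Adj u v := by simp [huv]
  have hcyc : (cons huv' (q.mapLe le_sup_left).reverse).IsCycle := by
    rw [cons_isCycle_iff, edges_reverse, List.mem_reverse, edges_mapLe_eq_edges]
    exact ⟨(hq.mapLe le_sup_left).reverse, fun h => hadj (q.edges_subset_edgeSet h)⟩
  exact ⟨⟨u, _, hcyc, hT.isAcyclic.edges_of_isCycle_sup_fromEdgeSet hq hcyc⟩,
    fun _ _ hp => hT.isAcyclic.edges_of_isCycle_sup_fromEdgeSet hq hp⟩

/-- Adding an edge `{u,v}` between non-adjacent vertices of a tree creates a cycle whose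
edge set is `{u,v}` together with the edges of the unique path from `u` to `v` in the
tree, and every cycle of the resulting graph has exactly this edge set. -/
theorem tree_add_edge_cycle {V : Type*} [Fintype V] [DecidableEq V]
    (T : SimpleGraph V) (hT : T.IsTree) (u v : V) (huv : u ≠ v) (hadj : ¬ T.Adj u v)
    (q : T.Walk u v) (hq : q.IsPath) :
    (∃ (w : V) (p : (T ⊔ SimpleGraph.fromEdgeSet {s(u, v)}).Walk w w),
        p.IsCycle ∧ {e : Sym2 V | e ∈ p.edges} = insert s(u, v) {e : Sym2 V | e ∈ q.edges}) ∧
      ∀ (w : V) (p : (T ⊔ SimpleGraph.fromEdgeSet {s(u, v)}).Walk w w), p.IsCycle →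
        {e : Sym2 V | e ∈ p.edges} = insert s(u, v) {e : Sym2 V | e ∈ q.edges} :=
  tree_add_edge_cycle_general T hT u v huv hadj q hq
end

section
/- Let T be a simple graph on a finite vertex type that is a tree, and let u, v, r be vertices of T. Then the symmetric difference of the edge set of the unique path from u to r in T and the edge set of the unique path from v to r in T equals the edge set of the unique path from u to v in T. -/
open SimpleGraph Walk

private lemma key_half {V : Type*} [DecidableEq V] {T : SimpleGraph V} (hT : T.IsTree)
    {u w r : V} (h : T.Adj u w) (pu : T.Walk u r) (hpu : pu.IsPath)
    (pw : T.Walk w r) (hpw : pw.IsPath) (hns : u ∉ pw.support) :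
    symmDiff {e : Sym2 V | e ∈ pu.edges} {e : Sym2 V | e ∈ pw.edges} = {s(u, w)} := by
  have hcons : (Walk.cons h pw).IsPath := (Walk.cons_isPath_iff h pw).mpr ⟨hpw, hns⟩
  have hpu' : pu = Walk.cons h pw := (hT.existsUnique_path u r).unique hpu hcons
  subst hpu'
  have hnot : s(u, w) ∉ pw.edges := fun hmem =>
    hns (Walk.fst_mem_support_of_mem_edges pw hmem)
  ext e
  simp only [Set.mem_symmDiff, Set.mem_setOf_eq, Walk.edges_cons, List.mem_cons,
    Set.mem_singleton_iff]
  constructor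
  · rintro (⟨(rfl | he), hne⟩ | ⟨he, hne⟩) <;> tauto
  · rintro rfl; tauto

private lemma key {V : Type*} [DecidableEq V] {T : SimpleGraph V} (hT : T.IsTree)
    {u w r : V} (h : T.Adj u w) (pu : T.Walk u r) (hpu : pu.IsPath)
    (pw : T.Walk w r) (hpw : pw.IsPath) :
    symmDiff {e : Sym2 V | e ∈ pu.edges} {e : Sym2 V | e ∈ pw.edges} = {s(u, w)} := by
  by_cases hus : u ∈ pw.support
  · by_cases hws : w ∈ pu.support
    · exfalso
      have h1 : pu = pw.dropUntil u hus :=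
        (hT.existsUnique_path u r).unique hpu (hpw.dropUntil hus)
      have h2 : pw = pu.dropUntil w hws :=
        (hT.existsUnique_path w r).unique hpw (hpu.dropUntil hws)
      have e1 : (pw.takeUntil u hus).length + (pw.dropUntil u hus).length = pw.length := by
        rw [← Walk.length_append, Walk.take_spec]
      have e2 : (pu.takeUntil w hws).length + (pu.dropUntil w hws).length = pu.length := by
        rw [← Walk.length_append, Walk.take_spec]
      have t1 : (pw.takeUntil u hus).length ≠ 0 := fun h0 =>
        h.ne (Walk.eq_of_length_eq_zero h0).symm
      have t2 : (pu.takeUntil w hws).length ≠ 0 := fun h0 =>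
        h.ne (Walk.eq_of_length_eq_zero h0)
      have l1 : pu.length = (pw.dropUntil u hus).length := by rw [h1]
      have l2 : pw.length = (pu.dropUntil w hws).length := by rw [h2]
      omega
    · have := key_half hT h.symm pw hpw pu hpu hws
      rw [symmDiff_comm] at this
      rw [this, Sym2.eq_swap]
  · exact key_half hT h pu hpu pw hpw hus

/-- In a tree, the symmetric difference of the edge sets of the unique paths from `u` to `r`
and from `v` to `r` is the edge set of the unique path from `u` to `v`. -/
theorem tree_path_symmDiff {V : Type*} [Fintype V] [DecidableEq V]
    (T : SimpleGraph V) (hT : T.IsTree) (u v r : V)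
    (pu : T.Walk u r) (hpu : pu.IsPath)
    (pv : T.Walk v r) (hpv : pv.IsPath)
    (puv : T.Walk u v) (hpuv : puv.IsPath) :
    ({e : Sym2 V | e ∈ pu.edges} ∪ {e : Sym2 V | e ∈ pv.edges}) \
        ({e : Sym2 V | e ∈ pu.edges} ∩ {e : Sym2 V | e ∈ pv.edges}) =
      {e : Sym2 V | e ∈ puv.edges} := by
  suffices hs : symmDiff {e : Sym2 V | e ∈ pu.edges} {e : Sym2 V | e ∈ pv.edges} =
      {e : Sym2 V | e ∈ puv.edges} by
    rw [← hs]
    ext e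
    simp only [Set.mem_symmDiff, Set.mem_diff, Set.mem_union, Set.mem_inter_iff,
      Set.mem_setOf_eq]
    tauto
  induction puv with
  | nil =>
    have : pu = pv := (hT.existsUnique_path _ r).unique hpu hpv
    subst this
    simp [symmDiff_self]
  | @cons u w v h q ih =>
    obtain ⟨pw, hpw, -⟩ := hT.existsUnique_path w r
    have hq : q.IsPath := ((Walk.cons_isPath_iff h q).mp hpuv).1
    have hu : u ∉ q.support := ((Walk.cons_isPath_iff h q).mp hpuv).2
    have h2 := ih pw hpw pv hpv hq
    have h1 := key hT h pu hpu pw hpw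
    have key3 : symmDiff {e : Sym2 V | e ∈ pu.edges} {e : Sym2 V | e ∈ pv.edges} =
        symmDiff (symmDiff {e : Sym2 V | e ∈ pu.edges} {e : Sym2 V | e ∈ pw.edges})
          (symmDiff {e : Sym2 V | e ∈ pw.edges} {e : Sym2 V | e ∈ pv.edges}) := by
      rw [symmDiff_assoc, symmDiff_symmDiff_cancel_left]
    rw [key3, h1, h2]
    have hnot : s(u, w) ∉ q.edges := fun hmem =>
      hu (Walk.fst_mem_support_of_mem_edges q hmem)
    ext e
    simp only [Set.mem_symmDiff, Set.mem_singleton_iff, Set.mem_setOf_eq, Walk.edges_cons,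
      List.mem_cons]
    constructor
    · rintro (⟨rfl, hne⟩ | ⟨he, hne⟩) <;> tauto
    · rintro (rfl | he)
      · exact Or.inl ⟨rfl, hnot⟩
      · exact Or.inr ⟨he, fun h' => hnot (h' ▸ he)⟩
end
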